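/- Let n ≥ 3. Let i ∈ [2^n] and k ∈ [2^{n+1}]\[2^n] have the same parity (i+k even). Suppose π′ and π″ are brackets on [2^n] with w_n(η_{n−3}, π′) = i and w_n(η_{n−3}, π″) = k − 2^n. Define the bracket π‴ on [2^{n+1}] by π‴_ℓ = π′_ℓ for ℓ ∈ [2^n] and π‴_ℓ = π″_{ℓ−2^n} + 2^n for ℓ ∈ [2^{n+1}]\[2^n]. Then candidates i and k reach the final round, and w_{n+1}(η_{n−2}, π‴) = i. -/
import Mathlib


/-- One knockout round: adjacent pairs play and the winners survive. -/
def roundStep (beats : ℕ → ℕ → Bool) : List ℕ → List ℕ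
  | a :: b :: rest => (if beats a b then a else b) :: roundStep beats rest
  | l => l

/-- The winner of the single-elimination knockout tournament with bracket `π`
(a list of length `2^n`), pairwise challenges decided by `beats`. -/
def knockWinner (n : ℕ) (beats : ℕ → ℕ → Bool) (π : List ℕ) : ℕ :=
  ((roundStep beats)^[n] π).headI

/-- The arrows of the tournament `η₀` on `{1,…,8}`. -/
def eta0Pairs : List (ℕ × ℕ) :=
  [(1,2),(1,3),(1,5),(2,3),(2,4),(2,6),(2,7),
   (3,4),(3,5),(3,6),(3,8),(4,1),(4,5),(4,8),
   (5,2),(5,6),(5,7),(6,1),(6,4),(6,7),(6,8),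
   (7,1),(7,3),(7,4),(7,8),(8,1),(8,2),(8,5)]

/-- The tournament `η₀` on `{1,…,8}`: `eta0 i j = true` iff `i ▷ j`. -/
def eta0 (i j : ℕ) : Bool := decide ((i, j) ∈ eta0Pairs)

/-- The recursively defined tournaments: `eta n` is the tournament `η_n` on
`{1,…,2^(n+3)}`, `eta n i j = true` meaning `i ▷ j`. -/
def eta : ℕ → ℕ → ℕ → Bool
  | 0, i, j => eta0 i j
  | n+1, i, j =>
    if i ≤ 2^(n+3) ∧ j ≤ 2^(n+3) then eta n i j
    else if 2^(n+3) < i ∧ 2^(n+3) < j then eta n (i - 2^(n+3)) (j - 2^(n+3))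
    else if i ≤ 2^(n+3) then decide ((i + j) % 2 = 0)
    else decide ((i + j) % 2 = 1)



lemma roundStep_cons_cons (b : ℕ → ℕ → Bool) (a c : ℕ) (rest : List ℕ) :
    roundStep b (a :: c :: rest) = (if b a c then a else c) :: roundStep b rest := rfl

lemma roundStep_subset (b : ℕ → ℕ → Bool) : ∀ l : List ℕ, ∀ x ∈ roundStep b l, x ∈ l
  | [] => by simp [roundStep]
  | [a] => by simp [roundStep]
  | a :: c :: rest => by
    intro x hx
    rw [roundStep_cons_cons] at hx
    rcases List.mem_cons.1 hx with h | h
    · subst h; split <;> simp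
    · exact List.mem_cons_of_mem _ (List.mem_cons_of_mem _ (roundStep_subset b rest x h))

lemma roundStep_congr (b b' : ℕ → ℕ → Bool) :
    ∀ l : List ℕ, (∀ x ∈ l, ∀ y ∈ l, b x y = b' x y) → roundStep b l = roundStep b' l
  | [] => fun _ => rfl
  | [a] => fun _ => rfl
  | a :: c :: rest => fun h => by
    rw [roundStep_cons_cons, roundStep_cons_cons, h a (by simp) c (by simp),
      roundStep_congr b b' rest (fun x hx y hy =>
        h x (by simp [hx]) y (by simp [hy]))]

lemma roundStep_map (b b' : ℕ → ℕ → Bool) (f : ℕ → ℕ) :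
    ∀ l : List ℕ, (∀ x ∈ l, ∀ y ∈ l, b' (f x) (f y) = b x y) →
      roundStep b' (l.map f) = (roundStep b l).map f
  | [] => fun _ => rfl
  | [a] => fun _ => rfl
  | a :: c :: rest => fun h => by
    simp only [List.map_cons, roundStep_cons_cons, h a (by simp) c (by simp)]
    rw [roundStep_map b b' f rest (fun x hx y hy =>
      h x (by simp [hx]) y (by simp [hy]))]
    by_cases hb : b a c <;> simp [hb]

lemma roundStep_length (b : ℕ → ℕ → Bool) :
    ∀ l : List ℕ, (roundStep b l).length = (l.length + 1) / 2
  | [] => rfl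
  | [a] => by simp [roundStep]
  | a :: c :: rest => by
    rw [roundStep_cons_cons]
    simp only [List.length_cons, roundStep_length b rest]
    omega

lemma roundStep_append (b : ℕ → ℕ → Bool) : ∀ l1 l2 : List ℕ, l1.length % 2 = 0 →
    roundStep b (l1 ++ l2) = roundStep b l1 ++ roundStep b l2
  | [], l2, _ => rfl
  | [a], l2, h => by simp at h
  | a :: c :: rest, l2, h => by
    simp only [List.cons_append, roundStep_cons_cons]
    rw [roundStep_append b rest l2 (by simp only [List.length_cons] at h; omega)]

lemma iterate_length (b : ℕ → ℕ → Bool) : ∀ (j : ℕ) (l : List ℕ), l.length = 2^j →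
    ((roundStep b)^[j] l).length = 1
  | 0, l, h => by simpa using h
  | j+1, l, h => by
    rw [Function.iterate_succ_apply]
    exact iterate_length b j _ (by rw [roundStep_length, h, pow_succ]; omega)

lemma iterate_append (b : ℕ → ℕ → Bool) : ∀ (j : ℕ) (l1 l2 : List ℕ), l1.length = 2^j →
    (roundStep b)^[j] (l1 ++ l2) = (roundStep b)^[j] l1 ++ (roundStep b)^[j] l2
  | 0, l1, l2, h => rfl
  | j+1, l1, l2, h => by
    rw [Function.iterate_succ_apply, Function.iterate_succ_apply, Function.iterate_succ_apply,
      roundStep_append b l1 l2 (by rw [h, pow_succ]; omega),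
      iterate_append b j _ _ (by rw [roundStep_length, h, pow_succ]; omega)]

lemma iterate_subset (b : ℕ → ℕ → Bool) : ∀ (j : ℕ) (l : List ℕ),
    ∀ x ∈ (roundStep b)^[j] l, x ∈ l
  | 0, l, x, hx => hx
  | j+1, l, x, hx => by
    rw [Function.iterate_succ_apply] at hx
    exact roundStep_subset b l x (iterate_subset b j _ x hx)

lemma iterate_congr (b b' : ℕ → ℕ → Bool) (S : ℕ → Prop)
    (hS : ∀ x, S x → ∀ y, S y → b x y = b' x y) :
    ∀ (j : ℕ) (l : List ℕ), (∀ x ∈ l, S x) →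
      (roundStep b)^[j] l = (roundStep b')^[j] l
  | 0, l, _ => rfl
  | j+1, l, hl => by
    rw [Function.iterate_succ_apply, Function.iterate_succ_apply,
      roundStep_congr b b' l (fun x hx y hy => hS x (hl x hx) y (hl y hy)),
      iterate_congr b b' S hS j _ (fun x hx => hl x (roundStep_subset b' l x hx))]

lemma iterate_map (b b' : ℕ → ℕ → Bool) (f : ℕ → ℕ) (S : ℕ → Prop)
    (hS : ∀ x, S x → ∀ y, S y → b' (f x) (f y) = b x y) :
    ∀ (j : ℕ) (l : List ℕ), (∀ x ∈ l, S x) →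
      (roundStep b')^[j] (l.map f) = ((roundStep b)^[j] l).map f
  | 0, l, _ => rfl
  | j+1, l, hl => by
    rw [Function.iterate_succ_apply, Function.iterate_succ_apply,
      roundStep_map b b' f l (fun x hx y hy => hS x (hl x hx) y (hl y hy)),
      iterate_map b b' f S hS j _ (fun x hx => hl x (roundStep_subset b l x hx))]


/-- The induction step of Theorem 1: gluing a bracket making `i ∈ [2^n]` win with a
(shifted) bracket making `k - 2^n` win, where `k ∈ [2^{n+1}]∖[2^n]` has the same
parity as `i`, produces a bracket for `η_{n-2}` on `[2^{n+1}]` whose final round is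
`(i, k)` and whose winner is `i`. -/
theorem stmt3 (n : ℕ) (hn : 3 ≤ n) (i k : ℕ)
    (hi : i ∈ List.range' 1 (2^n))
    (hk1 : 2^n < k) (hk2 : k ≤ 2^(n+1))
    (hpar : (i + k) % 2 = 0)
    (pi1 pi2 : List ℕ)
    (hpi1 : pi1.Perm (List.range' 1 (2^n)))
    (hpi2 : pi2.Perm (List.range' 1 (2^n)))
    (hw1 : knockWinner n (eta (n-3)) pi1 = i)
    (hw2 : knockWinner n (eta (n-3)) pi2 = k - 2^n) :
    (roundStep (eta (n-2)))^[n] (pi1 ++ pi2.map (· + 2^n)) = [i, k] ∧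
    knockWinner (n+1) (eta (n-2)) (pi1 ++ pi2.map (· + 2^n)) = i := by
  obtain ⟨m, rfl⟩ : ∃ m, n = m + 3 := ⟨n - 3, by omega⟩
  simp only [show m + 3 - 3 = m from rfl, show m + 3 - 2 = m + 1 from rfl] at *
  have hcongr : ∀ x, (1 ≤ x ∧ x ≤ 2^(m+3)) → ∀ y, (1 ≤ y ∧ y ≤ 2^(m+3)) →
      eta m x y = eta (m+1) x y := by
    intro x hx y hy
    simp only [eta]
    rw [if_pos ⟨hx.2, hy.2⟩]
  have hmap : ∀ x, (1 ≤ x ∧ x ≤ 2^(m+3)) → ∀ y, (1 ≤ y ∧ y ≤ 2^(m+3)) →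
      eta (m+1) (x + 2^(m+3)) (y + 2^(m+3)) = eta m x y := by
    intro x hx y hy
    simp only [eta]
    rw [if_neg (by omega), if_pos (by omega)]
    simp
  have hlen1 : pi1.length = 2^(m+3) := by simpa using hpi1.length_eq
  have hlen2 : pi2.length = 2^(m+3) := by simpa using hpi2.length_eq
  have hmem1 : ∀ x ∈ pi1, 1 ≤ x ∧ x ≤ 2^(m+3) := by
    intro x hx
    have := hpi1.mem_iff.1 hx
    simp only [List.mem_range'_1] at this
    omega
  have hmem2 : ∀ x ∈ pi2, 1 ≤ x ∧ x ≤ 2^(m+3) := by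
    intro x hx
    have := hpi2.mem_iff.1 hx
    simp only [List.mem_range'_1] at this
    omega
  have hiB : 1 ≤ i ∧ i ≤ 2^(m+3) := by
    simp only [List.mem_range'_1] at hi
    omega
  have key1 : (roundStep (eta (m+1)))^[m+3] pi1 = [i] := by
    rw [← iterate_congr (eta m) (eta (m+1)) _ hcongr (m+3) pi1 hmem1]
    obtain ⟨a, ha⟩ := List.length_eq_one_iff.1 (iterate_length (eta m) (m+3) pi1 hlen1)
    rw [ha]
    rw [knockWinner, ha] at hw1
    simpa using hw1
  have key2 : (roundStep (eta (m+1)))^[m+3] (pi2.map (· + 2^(m+3))) = [k] := by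
    rw [iterate_map (eta m) (eta (m+1)) _ _ hmap (m+3) pi2 hmem2]
    obtain ⟨a, ha⟩ := List.length_eq_one_iff.1 (iterate_length (eta m) (m+3) pi2 hlen2)
    rw [ha]
    rw [knockWinner, ha] at hw2
    simp only [List.headI] at hw2
    subst hw2
    simp only [List.map_cons, List.map_nil, List.cons.injEq, and_true]
    omega
  have final : (roundStep (eta (m+1)))^[m+3] (pi1 ++ pi2.map (· + 2^(m+3))) = [i, k] := by
    rw [iterate_append (eta (m+1)) (m+3) _ _ hlen1, key1, key2]
    rfl
  refine ⟨final, ?_⟩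
  rw [knockWinner, Function.iterate_succ_apply', final]
  have hik : eta (m+1) i k = true := by
    simp only [eta]
    rw [if_neg (by omega), if_neg (by omega), if_pos hiB.2]
    simpa using hpar
  rw [roundStep_cons_cons, hik]
  rfl
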